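/- arXiv:2604.15928 — 2 statements merged into one kernel-verified Lean document; each statement's English description precedes it below -/
import Mathlib

section
/- Let F be a field of characteristic 2 and α, β, γ, δ ∈ F× with γδ(z²γ + w²δ) ≠ 0 and z²γ + w²δ + v²γδ ≠ 0 for z, w, v ∈ F. Then {γ, δ}₂ = {z²γ + w²δ + v²γδ, γδ(z²γ + w²δ)}₂ in K₂(F)/2K₂(F). -/
namespace Milnor

variable (F : Type*) [Field F]

/-- Relations defining the Milnor K-group `K_n(F)`: multiplicativity in each
slot and the Steinberg relation. -/
def rels (n : ℕ) : AddSubgroup (FreeAbelianGroup (Fin n → Fˣ)) :=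
  AddSubgroup.closure
    ({ x | ∃ (i : Fin n) (u v w : Fin n → Fˣ),
        (∀ j, j ≠ i → u j = v j ∧ u j = w j) ∧ w i = u i * v i ∧
        x = FreeAbelianGroup.of w - FreeAbelianGroup.of u - FreeAbelianGroup.of v } ∪
     { x | ∃ (i j : Fin n) (u : Fin n → Fˣ), i ≠ j ∧ (u i : F) + (u j : F) = 1 ∧
        x = FreeAbelianGroup.of u })

/-- The Milnor K-group `K_n(F)`. -/
def K (n : ℕ) := FreeAbelianGroup (Fin n → Fˣ) ⧸ rels F n

instance (n : ℕ) : AddCommGroup (K F n) :=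
  QuotientAddGroup.Quotient.addCommGroup _

/-- The subgroup `2^m K_n(F)` of `K_n(F)`. -/
def modSub (n m : ℕ) : AddSubgroup (K F n) :=
  AddSubgroup.closure { x | ∃ y : K F n, x = (2 ^ m) • y }

/-- The quotient `K_n(F)/2^m K_n(F)`. -/
def KMod (n m : ℕ) := K F n ⧸ modSub F n m

instance (n m : ℕ) : AddCommGroup (KMod F n m) :=
  QuotientAddGroup.Quotient.addCommGroup _

variable {F}

/-- The class of the symbol `{v 0, …, v (n-1)}` in `K_n(F)/2^m K_n(F)`. -/
def symbol {n : ℕ} (m : ℕ) (v : Fin n → Fˣ) : KMod F n m :=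
  QuotientAddGroup.mk (QuotientAddGroup.mk (FreeAbelianGroup.of v) : K F n)

open scoped Classical in
/-- `{a,b}` in `K₂(F)/2^m K₂(F)` for field elements, with junk value `0` if an
entry vanishes.  So `s2 1 a b` is `{a,b}₂` and `s2 2 a b` is `{a,b}₄`. -/
noncomputable def s2 (m : ℕ) (a b : F) : KMod F 2 m :=
  if h : a ≠ 0 ∧ b ≠ 0 then symbol m ![Units.mk0 a h.1, Units.mk0 b h.2] else 0

open scoped Classical in
/-- `{a,b,c,d}` in `K₄(F)/2^m K₄(F)` for field elements, junk value `0`. -/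
noncomputable def s4 (m : ℕ) (a b c d : F) : KMod F 4 m :=
  if h : a ≠ 0 ∧ b ≠ 0 ∧ c ≠ 0 ∧ d ≠ 0 then
    symbol m ![Units.mk0 a h.1, Units.mk0 b h.2.1, Units.mk0 c h.2.2.1, Units.mk0 d h.2.2.2]
  else 0

end Milnor

open Milnor

/-!
If `t = x²a + y²b ≠ 0`, the Steinberg relation `{x²a/t, y²b/t} = 0` gives, modulo 2 and
using `{t, t} = {t, -t} = 0` in characteristic 2, the identity `{a, b} = {t, ab}`. Applied
to `t = z²γ + w²δ` and then to `z²γ + w²δ + v²γδ = 1²t + v²(γδ)`, it yields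
`{γ, δ} = {t, γδ} = {z²γ + w²δ + v²γδ, tγδ}`.
-/

namespace Milnor

variable {F : Type*} [Field F]

theorem KMod.two_pow_smul_eq_zero {n m : ℕ} (x : KMod F n m) : (2 ^ m) • x = 0 := by
  induction x using QuotientAddGroup.induction_on with
  | H y =>
    change (QuotientAddGroup.mk ((2 ^ m) • y) : K F n ⧸ modSub F n m) = 0
    exact (QuotientAddGroup.eq_zero_iff _).2 (AddSubgroup.subset_closure ⟨y, rfl⟩)

theorem KMod.add_self_eq_zero {n : ℕ} (x : KMod F n 1) : x + x = 0 := by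
  simpa [two_smul] using KMod.two_pow_smul_eq_zero x

theorem KMod.neg_eq_self {n : ℕ} (x : KMod F n 1) : -x = x :=
  neg_eq_of_add_eq_zero_left (KMod.add_self_eq_zero x)

theorem symbol_eq_zero_of_mem_rels {n m : ℕ} {x : FreeAbelianGroup (Fin n → Fˣ)}
    (hx : x ∈ rels F n) :
    (QuotientAddGroup.mk (QuotientAddGroup.mk x : K F n) : KMod F n m) = 0 := by
  rw [(QuotientAddGroup.eq_zero_iff x).2 hx]
  exact QuotientAddGroup.mk_zero _

def symbol₂ (m : ℕ) (a b : Fˣ) : KMod F 2 m := symbol m ![a, b]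

theorem s2_of_ne_zero (m : ℕ) {a b : F} (ha : a ≠ 0) (hb : b ≠ 0) :
    s2 m a b = symbol₂ m (Units.mk0 a ha) (Units.mk0 b hb) :=
  dif_pos ⟨ha, hb⟩

section Symbol₂

variable (m : ℕ)

theorem symbol₂_mul_left (a a' b : Fˣ) :
    symbol₂ m (a * a') b = symbol₂ m a b + symbol₂ m a' b := by
  have hrel : FreeAbelianGroup.of ![a * a', b] - FreeAbelianGroup.of ![a, b]
      - FreeAbelianGroup.of ![a', b] ∈ rels F 2 := by
    refine AddSubgroup.subset_closure
      (Or.inl ⟨0, ![a, b], ![a', b], ![a * a', b], ?_, rfl, rfl⟩)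
    intro j hj
    fin_cases j
    · exact absurd rfl hj
    · exact ⟨rfl, rfl⟩
  rw [← sub_eq_zero, ← sub_sub]
  exact symbol_eq_zero_of_mem_rels hrel

theorem symbol₂_mul_right (a b b' : Fˣ) :
    symbol₂ m a (b * b') = symbol₂ m a b + symbol₂ m a b' := by
  have hrel : FreeAbelianGroup.of ![a, b * b'] - FreeAbelianGroup.of ![a, b]
      - FreeAbelianGroup.of ![a, b'] ∈ rels F 2 := by
    refine AddSubgroup.subset_closure
      (Or.inl ⟨1, ![a, b], ![a, b'], ![a, b * b'], ?_, rfl, rfl⟩)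
    intro j hj
    fin_cases j
    · exact ⟨rfl, rfl⟩
    · exact absurd rfl hj
  rw [← sub_eq_zero, ← sub_sub]
  exact symbol_eq_zero_of_mem_rels hrel

theorem symbol₂_eq_zero_of_add_eq_one {a b : Fˣ} (h : (a : F) + b = 1) : symbol₂ m a b = 0 :=
  symbol_eq_zero_of_mem_rels
    (AddSubgroup.subset_closure (Or.inr ⟨0, 1, ![a, b], by decide, by simpa using h, rfl⟩))

theorem symbol₂_one_left (b : Fˣ) : symbol₂ m (1 : Fˣ) b = 0 := by
  simpa using symbol₂_mul_left m 1 1 b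

theorem symbol₂_inv_left (a b : Fˣ) : symbol₂ m a⁻¹ b = -symbol₂ m a b := by
  have h := symbol₂_mul_left m a a⁻¹ b
  rw [mul_inv_cancel, symbol₂_one_left] at h
  exact eq_neg_of_add_eq_zero_right h.symm

theorem symbol₂_one_right (a : Fˣ) : symbol₂ m a (1 : Fˣ) = 0 := by
  simpa using symbol₂_mul_right m a 1 1

theorem symbol₂_inv_right (a b : Fˣ) : symbol₂ m a b⁻¹ = -symbol₂ m a b := by
  have h := symbol₂_mul_right m a b b⁻¹
  rw [mul_inv_cancel, symbol₂_one_right] at h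
  exact eq_neg_of_add_eq_zero_right h.symm

/-- For `a ≠ 1`, `-a = (1 - a)/(1 - a⁻¹)`, and both `{a, 1 - a}` and
`{a, 1 - a⁻¹} = -{a⁻¹, 1 - a⁻¹}` vanish by the Steinberg relation. -/
theorem symbol₂_neg_right_self (a : Fˣ) : symbol₂ m a (-a) = 0 := by
  rcases eq_or_ne a 1 with rfl | ha
  · exact symbol₂_one_left m _
  have ha' : a⁻¹ ≠ 1 := inv_ne_one.mpr ha
  have hsub : ∀ u : Fˣ, u ≠ 1 → (1 : F) - u ≠ 0 := fun u hu h =>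
    hu (Units.ext (sub_eq_zero.mp h).symm)
  set c : Fˣ := Units.mk0 (1 - a) (hsub a ha)
  set c' : Fˣ := Units.mk0 (1 - (a⁻¹ : Fˣ)) (hsub _ ha')
  have hneg : -a = c * c'⁻¹ := by
    rw [eq_mul_inv_iff_mul_eq]
    ext
    simp [c, c', mul_sub]
  have hc : symbol₂ m a c = 0 := symbol₂_eq_zero_of_add_eq_one m (by simp [c])
  have hc' : symbol₂ m a c' = 0 := by
    rw [← neg_eq_zero, ← symbol₂_inv_left]
    exact symbol₂_eq_zero_of_add_eq_one m (by simp [c'])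
  rw [hneg, symbol₂_mul_right, symbol₂_inv_right, hc, hc', neg_zero, add_zero]

theorem symbol₂_add_swap (a b : Fˣ) : symbol₂ m a b + symbol₂ m b a = 0 :=
  calc symbol₂ m a b + symbol₂ m b a = symbol₂ m a (-a * b) + symbol₂ m b (a * -b) := by
        rw [symbol₂_mul_right, symbol₂_mul_right, symbol₂_neg_right_self,
          symbol₂_neg_right_self, zero_add, add_zero]
    _ = symbol₂ m (a * b) (-(a * b)) := by rw [neg_mul, mul_neg, symbol₂_mul_left]
    _ = 0 := symbol₂_neg_right_self m _

end Symbol₂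

theorem symbol₂_comm (a b : Fˣ) : symbol₂ 1 a b = symbol₂ 1 b a := by
  rw [eq_neg_of_add_eq_zero_left (symbol₂_add_swap 1 a b), KMod.neg_eq_self]

theorem symbol₂_sq_mul_left (u a b : Fˣ) : symbol₂ 1 (u ^ 2 * a) b = symbol₂ 1 a b := by
  rw [symbol₂_mul_left, sq, symbol₂_mul_left, KMod.add_self_eq_zero, zero_add]

theorem symbol₂_sq_mul_right (a u b : Fˣ) : symbol₂ 1 a (u ^ 2 * b) = symbol₂ 1 a b := by
  rw [symbol₂_mul_right, sq, symbol₂_mul_right, KMod.add_self_eq_zero, zero_add]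

section CharTwo

variable [CharP F 2]

theorem symbol₂_self (a : Fˣ) : symbol₂ 1 a a = 0 := by
  simpa [show -a = a from Units.ext (CharTwo.neg_eq _)] using symbol₂_neg_right_self 1 a

theorem symbol₂_eq_of_eq_unit_sq_mul_add_unit_sq_mul {a b t : Fˣ} (u w : Fˣ)
    (h : (t : F) = u ^ 2 * a + w ^ 2 * b) : symbol₂ 1 a b = symbol₂ 1 t (a * b) := by
  have hsum : ((u ^ 2 * (a * t⁻¹) : Fˣ) : F) + (w ^ 2 * (b * t⁻¹) : Fˣ) = 1 := by
    have ht := t.ne_zero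
    push_cast
    field_simp
    exact h.symm
  have hst := symbol₂_eq_zero_of_add_eq_one 1 hsum
  rw [symbol₂_sq_mul_left, symbol₂_sq_mul_right] at hst
  simp only [symbol₂_mul_left, symbol₂_mul_right, symbol₂_inv_left, symbol₂_inv_right,
    KMod.neg_eq_self, symbol₂_self, add_zero] at hst
  rw [symbol₂_mul_right, symbol₂_comm t a, ← sub_eq_zero, sub_eq_add_neg, KMod.neg_eq_self,
    ← hst]
  abel

theorem symbol₂_eq_of_eq_sq_mul_add_sq_mul {a b t : Fˣ} (x y : F)
    (h : (t : F) = x ^ 2 * a + y ^ 2 * b) : symbol₂ 1 a b = symbol₂ 1 t (a * b) := by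
  rcases eq_or_ne x 0 with rfl | hx
  · have hy : y ≠ 0 := by
      rintro rfl
      simp at h
    rw [show t = Units.mk0 y hy ^ 2 * b from Units.ext (by simpa using h), symbol₂_sq_mul_left,
      symbol₂_mul_right, symbol₂_self, add_zero, symbol₂_comm]
  rcases eq_or_ne y 0 with rfl | hy
  · rw [show t = Units.mk0 x hx ^ 2 * a from Units.ext (by simpa using h), symbol₂_sq_mul_left,
      symbol₂_mul_right, symbol₂_self, zero_add]
  exact symbol₂_eq_of_eq_unit_sq_mul_add_unit_sq_mul (Units.mk0 x hx) (Units.mk0 y hy)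
    (by simpa using h)

end CharTwo

end Milnor

theorem stmt2_general (F : Type*) [Field F] [CharP F 2] (γ δ z w v : F)
    (hγ : γ ≠ 0) (hδ : δ ≠ 0)
    (h1 : γ * δ * (z ^ 2 * γ + w ^ 2 * δ) ≠ 0)
    (h2 : z ^ 2 * γ + w ^ 2 * δ + v ^ 2 * γ * δ ≠ 0) :
    s2 1 γ δ =
      s2 1 (z ^ 2 * γ + w ^ 2 * δ + v ^ 2 * γ * δ) (γ * δ * (z ^ 2 * γ + w ^ 2 * δ)) := by
  have ht : z ^ 2 * γ + w ^ 2 * δ ≠ 0 := right_ne_zero_of_mul h1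
  set t := Units.mk0 _ ht
  set g := Units.mk0 γ hγ
  set d := Units.mk0 δ hδ
  rw [s2_of_ne_zero 1 hγ hδ, s2_of_ne_zero 1 h2 h1]
  calc symbol₂ 1 g d = symbol₂ 1 t (g * d) := symbol₂_eq_of_eq_sq_mul_add_sq_mul z w rfl
    _ = symbol₂ 1 (Units.mk0 _ h2) (t * (g * d)) := by
        refine symbol₂_eq_of_eq_sq_mul_add_sq_mul 1 v ?_
        simp only [Units.val_mul, Units.val_mk0, t, g, d]
        ring
    _ = _ := by
        congr 1
        ext
        simp only [Units.val_mul, Units.val_mk0, t, g, d]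
        ring

/-- `{γ,δ}₂ = {z²γ + w²δ + v²γδ, γδ(z²γ + w²δ)}₂` whenever the two
displayed scalars are nonzero. -/
theorem stmt2 (F : Type*) [Field F] [CharP F 2] (α β γ δ z w v : F)
    (hα : α ≠ 0) (hβ : β ≠ 0) (hγ : γ ≠ 0) (hδ : δ ≠ 0)
    (h1 : γ * δ * (z ^ 2 * γ + w ^ 2 * δ) ≠ 0)
    (h2 : z ^ 2 * γ + w ^ 2 * δ + v ^ 2 * γ * δ ≠ 0) :
    s2 1 γ δ =
      s2 1 (z ^ 2 * γ + w ^ 2 * δ + v ^ 2 * γ * δ) (γ * δ * (z ^ 2 * γ + w ^ 2 * δ)) :=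
  stmt2_general F γ δ z w v hγ hδ h1 h2
end

section
/- Let F be a field of characteristic 2 and a, b, c, d ∈ F× with a common slot in their symbols: suppose {a,b}₂ = {e,f}₂ and {c,d}₂ = {e,g}₂ for some e, f, g ∈ F×. Then the 6-dimensional form ⟨a, b, ab, c, d, cd⟩ is isotropic over F. -/
open Milnor

namespace Milnor

variable {F : Type*} [Field F] {G : Type*} [AddCommGroup G]

def liftMod2 (φ : Fˣ → Fˣ → G) (hl : ∀ x x' y, φ (x * x') y = φ x y + φ x' y)
    (hr : ∀ x y y', φ x (y * y') = φ x y + φ x y')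
    (hst : ∀ x y : Fˣ, (x : F) + y = 1 → φ x y = 0) (h2 : ∀ g : G, 2 • g = 0) :
    KMod F 2 1 →+ G :=
  let ψ : K F 2 →+ G :=
    QuotientAddGroup.lift _ (FreeAbelianGroup.lift fun u => φ (u 0) (u 1)) <| by
      rw [rels, AddSubgroup.closure_le]
      rintro _ (⟨i, u, v, w, hother, hw, rfl⟩ | ⟨i, j, u, hij, hsum, rfl⟩)
      · simp only [SetLike.mem_coe, AddMonoidHom.mem_ker, map_sub, FreeAbelianGroup.lift_apply_of]
        fin_cases i
        · obtain ⟨h1, h1'⟩ := hother 1 (by decide)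
          simp only [Fin.zero_eta] at hw
          rw [hw, ← h1', ← h1, hl, sub_sub, sub_self]
        · obtain ⟨h0, h0'⟩ := hother 0 (by decide)
          simp only [Fin.mk_one] at hw
          rw [hw, ← h0', ← h0, hr, sub_sub, sub_self]
      · simp only [SetLike.mem_coe, AddMonoidHom.mem_ker, FreeAbelianGroup.lift_apply_of]
        fin_cases i <;> fin_cases j
        · exact absurd rfl hij
        · exact hst _ _ hsum
        · exact hst _ _ ((add_comm _ _).trans hsum)
        · exact absurd rfl hij
  QuotientAddGroup.lift _ ψ <| by
    rw [modSub, AddSubgroup.closure_le]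
    rintro _ ⟨y, rfl⟩
    simp only [SetLike.mem_coe, AddMonoidHom.mem_ker, map_nsmul, pow_one, h2]

theorem liftMod2_s2 (φ : Fˣ → Fˣ → G) (hl hr hst h2) {a b : F} (ha : a ≠ 0) (hb : b ≠ 0) :
    liftMod2 φ hl hr hst h2 (s2 1 a b) = φ (Units.mk0 a ha) (Units.mk0 b hb) := by
  rw [s2, dif_pos ⟨ha, hb⟩]
  exact FreeAbelianGroup.lift_apply_of _ _

end Milnor

namespace Subfield

variable {F : Type*} [Field F]

theorem eq_and_eq_of_add_mul_eq {K : Subfield F} {x u v u' v' : F} (hx : x ∉ K) (hu : u ∈ K)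
    (hv : v ∈ K) (hu' : u' ∈ K) (hv' : v' ∈ K) (h : u + v * x = u' + v' * x) : u = u' ∧ v = v' := by
  have hvv : v = v' := by
    by_contra hne
    have hx' : x = (u' - u) / (v - v') := by
      field_simp [sub_ne_zero.mpr hne]
      linear_combination h
    exact hx (hx' ▸ K.div_mem (K.sub_mem hu' hu) (K.sub_mem hv hv'))
  subst hvv
  exact ⟨add_right_cancel h, rfl⟩

/-- The `x`-coordinate of `z` in `K ⊕ K x`, junk `0` when `z ∉ K ⊕ K x`. -/
noncomputable def adjoinCoeff (K : Subfield F) (x z : F) : F :=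
  open Classical in if h : ∃ v ∈ K, z - v * x ∈ K then h.choose else 0

theorem adjoinCoeff_add_mul {K : Subfield F} {x u v : F} (hx : x ∉ K) (hu : u ∈ K) (hv : v ∈ K) :
    K.adjoinCoeff x (u + v * x) = v := by
  have h : ∃ v' ∈ K, u + v * x - v' * x ∈ K := ⟨v, hv, by simpa using hu⟩
  rw [adjoinCoeff, dif_pos h]
  obtain ⟨hv', hu'⟩ := h.choose_spec
  exact (eq_and_eq_of_add_mul_eq hx hu' hv' hu hv (by ring)).2

variable [CharP F 2]

/-- `K ⊕ K x` is a field as soon as `x ^ 2 ∈ K`, because `(u + v x)⁻¹ = (u + v x) / (u² + v² x²)`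
in characteristic `2`. -/
def adjoinSqrt (K : Subfield F) (x : F) (hx : x ^ 2 ∈ K) : Subfield F where
  carrier := {z | ∃ u ∈ K, ∃ v ∈ K, z = u + v * x}
  zero_mem' := ⟨0, K.zero_mem, 0, K.zero_mem, by ring⟩
  one_mem' := ⟨1, K.one_mem, 0, K.zero_mem, by ring⟩
  add_mem' := by
    rintro _ _ ⟨u, hu, v, hv, rfl⟩ ⟨u', hu', v', hv', rfl⟩
    exact ⟨u + u', K.add_mem hu hu', v + v', K.add_mem hv hv', by ring⟩
  mul_mem' := by
    rintro _ _ ⟨u, hu, v, hv, rfl⟩ ⟨u', hu', v', hv', rfl⟩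
    refine ⟨u * u' + v * v' * x ^ 2, ?_, u * v' + v * u', ?_, by ring⟩
    · exact K.add_mem (K.mul_mem hu hu') (K.mul_mem (K.mul_mem hv hv') hx)
    · exact K.add_mem (K.mul_mem hu hv') (K.mul_mem hv hu')
  neg_mem' := by
    rintro _ ⟨u, hu, v, hv, rfl⟩
    exact ⟨-u, K.neg_mem hu, -v, K.neg_mem hv, by ring⟩
  inv_mem' := by
    rintro _ ⟨u, hu, v, hv, rfl⟩
    have hw : ((u + v * x) ^ 2)⁻¹ ∈ K := by
      rw [CharTwo.add_sq, mul_pow]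
      exact K.inv_mem (K.add_mem (K.pow_mem hu 2) (K.mul_mem (K.pow_mem hv 2) hx))
    refine ⟨u * ((u + v * x) ^ 2)⁻¹, K.mul_mem hu hw, v * ((u + v * x) ^ 2)⁻¹, K.mul_mem hv hw, ?_⟩
    rw [← div_self_mul_self', ← sq]
    ring

theorem mem_adjoinSqrt {K : Subfield F} {x : F} {hx : x ^ 2 ∈ K} {z : F} :
    z ∈ K.adjoinSqrt x hx ↔ ∃ u ∈ K, ∃ v ∈ K, z = u + v * x :=
  Iff.rfl

theorem le_adjoinSqrt (K : Subfield F) (x : F) (hx : x ^ 2 ∈ K) : K ≤ K.adjoinSqrt x hx :=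
  fun z hz => ⟨z, hz, 0, K.zero_mem, by ring⟩

theorem mem_adjoinSqrt_self (K : Subfield F) (x : F) (hx : x ^ 2 ∈ K) : x ∈ K.adjoinSqrt x hx :=
  ⟨0, K.zero_mem, 1, K.one_mem, by ring⟩

end Subfield

section Squares

variable {F : Type*} [Field F] [CharP F 2]

variable (F) in
def squares : Subfield F := (frobenius F 2).fieldRange

theorem mem_squares {x : F} : x ∈ squares F ↔ ∃ y, y ^ 2 = x := by
  simp only [squares, RingHom.mem_fieldRange, frobenius_def]

theorem sq_mem_squares (y : F) : y ^ 2 ∈ squares F := mem_squares.mpr ⟨y, rfl⟩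

def squaresAdjoin (a : F) : Subfield F := (squares F).adjoinSqrt a (sq_mem_squares a)

theorem squares_le_squaresAdjoin (a : F) : squares F ≤ squaresAdjoin a :=
  (squares F).le_adjoinSqrt a _

def squaresAdjoin₂ (a b : F) : Subfield F :=
  (squaresAdjoin a).adjoinSqrt b (squares_le_squaresAdjoin a (sq_mem_squares b))

theorem mem_squaresAdjoin {a z : F} : z ∈ squaresAdjoin a ↔ ∃ s t, z = s ^ 2 + a * t ^ 2 := by
  simp only [squaresAdjoin, Subfield.mem_adjoinSqrt, mem_squares]
  constructor
  · rintro ⟨_, ⟨s, rfl⟩, _, ⟨t, rfl⟩, rfl⟩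
    exact ⟨s, t, by ring⟩
  · rintro ⟨s, t, rfl⟩
    exact ⟨_, ⟨s, rfl⟩, _, ⟨t, rfl⟩, by ring⟩

theorem mem_squaresAdjoin₂ {a b z : F} :
    z ∈ squaresAdjoin₂ a b ↔ ∃ s t u v, z = s ^ 2 + a * t ^ 2 + b * u ^ 2 + a * b * v ^ 2 := by
  rw [squaresAdjoin₂, Subfield.mem_adjoinSqrt]
  constructor
  · rintro ⟨_, hx, _, hy, rfl⟩
    obtain ⟨s, t, rfl⟩ := mem_squaresAdjoin.mp hx
    obtain ⟨u, v, rfl⟩ := mem_squaresAdjoin.mp hy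
    exact ⟨s, t, u, v, by ring⟩
  · rintro ⟨s, t, u, v, rfl⟩
    exact ⟨_, mem_squaresAdjoin.mpr ⟨s, t, rfl⟩, _, mem_squaresAdjoin.mpr ⟨u, v, rfl⟩, by ring⟩

theorem eq_zero_of_sq_add_mul_sq_eq_zero {a s t : F} (ha : a ∉ squares F)
    (h : s ^ 2 + a * t ^ 2 = 0) : s = 0 ∧ t = 0 := by
  obtain ⟨hs, ht⟩ := Subfield.eq_and_eq_of_add_mul_eq ha (sq_mem_squares s) (sq_mem_squares t)
    (zero_mem _) (zero_mem _) (by linear_combination h)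
  exact ⟨eq_zero_of_pow_eq_zero hs, eq_zero_of_pow_eq_zero ht⟩

theorem eq_zero_of_pfister_eq_zero {a b s t u v : F} (ha : a ∉ squares F)
    (hb : b ∉ squaresAdjoin a) (h : s ^ 2 + a * t ^ 2 + b * u ^ 2 + a * b * v ^ 2 = 0) :
    s = 0 ∧ t = 0 ∧ u = 0 ∧ v = 0 := by
  obtain ⟨hst, huv⟩ := Subfield.eq_and_eq_of_add_mul_eq hb
    (mem_squaresAdjoin.mpr ⟨s, t, rfl⟩) (mem_squaresAdjoin.mpr ⟨u, v, rfl⟩)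
    (zero_mem _) (zero_mem _) (by linear_combination h)
  exact ⟨(eq_zero_of_sq_add_mul_sq_eq_zero ha hst).1, (eq_zero_of_sq_add_mul_sq_eq_zero ha hst).2,
    (eq_zero_of_sq_add_mul_sq_eq_zero ha huv).1, (eq_zero_of_sq_add_mul_sq_eq_zero ha huv).2⟩

theorem exists_isotropic_of_mem_squares_or {a b : F} (h : a ∈ squares F ∨ b ∈ squaresAdjoin a) :
    ∃ x y z : F, ¬(x = 0 ∧ y = 0 ∧ z = 0) ∧ a * x ^ 2 + b * y ^ 2 + a * b * z ^ 2 = 0 := by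
  rcases h with h | h
  · obtain ⟨α, rfl⟩ := mem_squares.mp h
    exact ⟨0, α, 1, by simp, by linear_combination b * α ^ 2 * CharTwo.two_eq_zero (R := F)⟩
  · obtain ⟨s, t, rfl⟩ := mem_squaresAdjoin.mp h
    rcases eq_or_ne (s ^ 2 + a * t ^ 2) 0 with hb | hb
    · exact ⟨0, 1, 0, by simp, by simp [hb]⟩
    · refine ⟨s ^ 2 + a * t ^ 2, a * t, s, fun h => hb h.1, ?_⟩
      linear_combination a * (s ^ 2 + a * t ^ 2) ^ 2 * CharTwo.two_eq_zero (R := F)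

end Squares

/-- `toFun` is only meaningful on `dom`; asking it to kill all squares, not just those in `dom`, is
what lets it extend to square roots. -/
structure PartialDerivation (F : Type*) [Field F] where
  dom : Subfield F
  toFun : F → F
  sq_mem : ∀ y : F, y ^ 2 ∈ dom
  map_sq : ∀ y : F, toFun (y ^ 2) = 0
  map_add : ∀ x ∈ dom, ∀ y ∈ dom, toFun (x + y) = toFun x + toFun y
  map_mul : ∀ x ∈ dom, ∀ y ∈ dom, toFun (x * y) = x * toFun y + y * toFun x

namespace PartialDerivation

variable {F : Type*} [Field F]

instance : Preorder (PartialDerivation F) where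
  le p q := p.dom ≤ q.dom ∧ ∀ x ∈ p.dom, q.toFun x = p.toFun x
  le_refl p := ⟨le_rfl, fun _ _ => rfl⟩
  le_trans p q r hpq hqr :=
    ⟨hpq.1.trans hqr.1, fun x hx => (hqr.2 x (hpq.1 hx)).trans (hpq.2 x hx)⟩

theorem map_zero (p : PartialDerivation F) : p.toFun 0 = 0 := by
  simpa using p.map_sq 0

theorem map_one (p : PartialDerivation F) : p.toFun 1 = 0 := by
  simpa using p.map_sq 1

noncomputable def extendFun (p : PartialDerivation F) (x c z : F) : F :=
  let v := p.dom.adjoinCoeff x z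
  p.toFun (z - v * x) + x * p.toFun v + v * c

theorem extendFun_add_mul (p : PartialDerivation F) {x u v : F} (c : F) (hx : x ∉ p.dom)
    (hu : u ∈ p.dom) (hv : v ∈ p.dom) :
    p.extendFun x c (u + v * x) = p.toFun u + x * p.toFun v + v * c := by
  simp only [extendFun, Subfield.adjoinCoeff_add_mul hx hu hv, add_sub_cancel_right]

def toDerivation (p : PartialDerivation F) (hp : ∀ z, z ∈ p.dom) : Derivation ℤ F F :=
  Derivation.mk' (AddMonoidHom.mk' p.toFun fun x y => p.map_add x (hp x) y (hp y)).toIntLinearMap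
    fun x y => p.map_mul x (hp x) y (hp y)

section Chain

variable {c : Set (PartialDerivation F)}

open Classical in
noncomputable def chainFun (c : Set (PartialDerivation F)) (z : F) : F :=
  if h : ∃ q ∈ c, z ∈ q.dom then h.choose.toFun z else 0

theorem chainFun_eq (hc : IsChain (· ≤ ·) c) {q : PartialDerivation F} (hq : q ∈ c) {z : F}
    (hz : z ∈ q.dom) : chainFun c z = q.toFun z := by
  have h : ∃ q ∈ c, z ∈ q.dom := ⟨q, hq, hz⟩
  rw [chainFun, dif_pos h]
  rcases hc.total h.choose_spec.1 hq with hle | hle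
  · exact (hle.2 z h.choose_spec.2).symm
  · exact hle.2 z hz

theorem mem_iSup_dom (hc : IsChain (· ≤ ·) c) (hne : c.Nonempty) {z : F} :
    z ∈ ⨆ q : c, q.1.dom ↔ ∃ q ∈ c, z ∈ q.dom := by
  have := hne.to_subtype
  have hdir : Directed (· ≤ ·) fun q : c => q.1.dom := fun q₁ q₂ =>
    (hc.total q₁.2 q₂.2).elim (fun h => ⟨q₂, h.1, le_rfl⟩) (fun h => ⟨q₁, le_rfl, h.1⟩)
  simp only [Subfield.mem_iSup_of_directed hdir, Subtype.exists, exists_prop]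

theorem exists_mem_dom_of_mem_iSup (hc : IsChain (· ≤ ·) c) (hne : c.Nonempty) {z z' : F}
    (hz : z ∈ ⨆ q : c, q.1.dom) (hz' : z' ∈ ⨆ q : c, q.1.dom) :
    ∃ q ∈ c, z ∈ q.dom ∧ z' ∈ q.dom := by
  obtain ⟨q, hq, hzq⟩ := (mem_iSup_dom hc hne).mp hz
  obtain ⟨q', hq', hzq'⟩ := (mem_iSup_dom hc hne).mp hz'
  rcases hc.total hq hq' with h | h
  · exact ⟨q', hq', h.1 hzq, hzq'⟩
  · exact ⟨q, hq, hzq, h.1 hzq'⟩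

noncomputable def chainSup (c : Set (PartialDerivation F)) (hc : IsChain (· ≤ ·) c)
    (hne : c.Nonempty) : PartialDerivation F where
  dom := ⨆ q : c, q.1.dom
  toFun := chainFun c
  sq_mem y := (mem_iSup_dom hc hne).mpr ⟨hne.some, hne.some_mem, hne.some.sq_mem y⟩
  map_sq y := by rw [chainFun_eq hc hne.some_mem (hne.some.sq_mem y), hne.some.map_sq]
  map_add z hz z' hz' := by
    obtain ⟨q, hq, hzq, hzq'⟩ := exists_mem_dom_of_mem_iSup hc hne hz hz'
    rw [chainFun_eq hc hq (q.dom.add_mem hzq hzq'), chainFun_eq hc hq hzq, chainFun_eq hc hq hzq',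
      q.map_add z hzq z' hzq']
  map_mul z hz z' hz' := by
    obtain ⟨q, hq, hzq, hzq'⟩ := exists_mem_dom_of_mem_iSup hc hne hz hz'
    rw [chainFun_eq hc hq (q.dom.mul_mem hzq hzq'), chainFun_eq hc hq hzq, chainFun_eq hc hq hzq',
      q.map_mul z hzq z' hzq']

theorem le_chainSup (hc : IsChain (· ≤ ·) c) (hne : c.Nonempty) {q : PartialDerivation F}
    (hq : q ∈ c) : q ≤ chainSup c hc hne :=
  ⟨fun _ hz => (mem_iSup_dom hc hne).mpr ⟨q, hq, hz⟩, fun _ hz => chainFun_eq hc hq hz⟩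

end Chain

variable [CharP F 2]

variable (F) in
def zero : PartialDerivation F where
  dom := squares F
  toFun := 0
  sq_mem := sq_mem_squares
  map_sq _ := rfl
  map_add _ _ _ _ := by simp
  map_mul _ _ _ _ := by simp

/-- Satisfies the Leibniz rule because `p` kills `x ^ 2`. -/
noncomputable def extend (p : PartialDerivation F) {x : F} (hx : x ∉ p.dom) (c : F) :
    PartialDerivation F where
  dom := p.dom.adjoinSqrt x (p.sq_mem x)
  toFun := p.extendFun x c
  sq_mem y := p.dom.le_adjoinSqrt x (p.sq_mem x) (p.sq_mem y)
  map_sq y := by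
    simpa [p.map_zero, p.map_sq] using p.extendFun_add_mul c hx (p.sq_mem y) p.dom.zero_mem
  map_add := by
    rintro _ ⟨u, hu, v, hv, rfl⟩ _ ⟨u', hu', v', hv', rfl⟩
    rw [show u + v * x + (u' + v' * x) = (u + u') + (v + v') * x by ring,
      p.extendFun_add_mul c hx (p.dom.add_mem hu hu') (p.dom.add_mem hv hv'),
      p.extendFun_add_mul c hx hu hv, p.extendFun_add_mul c hx hu' hv',
      p.map_add u hu u' hu', p.map_add v hv v' hv']
    ring
  map_mul := by
    rintro _ ⟨u, hu, v, hv, rfl⟩ _ ⟨u', hu', v', hv', rfl⟩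
    have hx2 := p.sq_mem x
    have huu' := p.dom.mul_mem hu hu'
    have hvv' := p.dom.mul_mem hv hv'
    have huv' := p.dom.mul_mem hu hv'
    have hvu' := p.dom.mul_mem hv hu'
    rw [show (u + v * x) * (u' + v' * x) = (u * u' + v * v' * x ^ 2) + (u * v' + v * u') * x by
        ring,
      p.extendFun_add_mul c hx (p.dom.add_mem huu' (p.dom.mul_mem hvv' hx2))
        (p.dom.add_mem huv' hvu'),
      p.extendFun_add_mul c hx hu hv, p.extendFun_add_mul c hx hu' hv',
      p.map_add _ huu' _ (p.dom.mul_mem hvv' hx2), p.map_add _ huv' _ hvu',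
      p.map_mul _ hvv' _ hx2, p.map_sq, p.map_mul u hu u' hu', p.map_mul v hv v' hv',
      p.map_mul u hu v' hv', p.map_mul v hv u' hu']
    linear_combination (-(c * v * v' * x)) * CharTwo.two_eq_zero (R := F)

theorem le_extend (p : PartialDerivation F) {x : F} (hx : x ∉ p.dom) (c : F) :
    p ≤ p.extend hx c := by
  refine ⟨p.dom.le_adjoinSqrt x (p.sq_mem x), fun z hz => ?_⟩
  show p.extendFun x c z = p.toFun z
  simpa [p.map_zero] using p.extendFun_add_mul c hx hz p.dom.zero_mem

theorem mem_extend_dom (p : PartialDerivation F) {x : F} (hx : x ∉ p.dom) (c : F) :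
    x ∈ (p.extend hx c).dom :=
  p.dom.mem_adjoinSqrt_self x (p.sq_mem x)

theorem extend_apply_self (p : PartialDerivation F) {x : F} (hx : x ∉ p.dom) (c : F) :
    (p.extend hx c).toFun x = c := by
  show p.extendFun x c x = c
  simpa [p.map_zero, p.map_one] using p.extendFun_add_mul c hx p.dom.zero_mem p.dom.one_mem

theorem exists_derivation_extending (p : PartialDerivation F) :
    ∃ D : Derivation ℤ F F, ∀ x ∈ p.dom, D x = p.toFun x := by
  obtain ⟨m, hpm, hm⟩ := zorn_le_nonempty_Ici₀ p
    (fun c _ hc q hq => ⟨chainSup c hc ⟨q, hq⟩, fun _ => le_chainSup hc ⟨q, hq⟩⟩) p le_rfl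
  have htop : ∀ z, z ∈ m.dom := fun z => by_contra fun hz =>
    hz ((hm (m.le_extend hz 0)).1 (m.mem_extend_dom hz 0))
  exact ⟨m.toDerivation htop, hpm.2⟩

theorem exists_derivation_extend (p : PartialDerivation F) {x : F} (hx : x ∉ p.dom) (c : F) :
    ∃ D : Derivation ℤ F F, (∀ z ∈ p.dom, D z = p.toFun z) ∧ D x = c := by
  obtain ⟨D, hD⟩ := (p.extend hx c).exists_derivation_extending
  refine ⟨D, fun z hz => ?_, ?_⟩
  · rw [hD z ((p.le_extend hx c).1 hz), (p.le_extend hx c).2 z hz]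
  · rw [hD x (p.mem_extend_dom hx c), p.extend_apply_self]

noncomputable def ofPair {a b : F} (ha : a ∉ squares F) (hb : b ∉ squaresAdjoin a) (ca cb : F) :
    PartialDerivation F :=
  ((zero F).extend ha ca).extend hb cb

theorem ofPair_spec {a b : F} (ha : a ∉ squares F) (hb : b ∉ squaresAdjoin a) (ca cb : F) :
    a ∈ (ofPair ha hb ca cb).dom ∧ b ∈ (ofPair ha hb ca cb).dom ∧
      (ofPair ha hb ca cb).toFun a = ca ∧ (ofPair ha hb ca cb).toFun b = cb := by
  have ha₁ := (zero F).mem_extend_dom ha ca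
  exact ⟨(le_extend _ hb cb).1 ha₁, mem_extend_dom _ hb cb,
    ((le_extend _ hb cb).2 a ha₁).trans (extend_apply_self _ ha ca), extend_apply_self _ hb cb⟩

end PartialDerivation

section Derivations

variable {F : Type*} [Field F]

/-- The `2`-form `dlog x ∧ dlog y` evaluated at the pair of derivations `(D, D')`. -/
noncomputable def dlogPair (D D' : Derivation ℤ F F) (x y : F) : F :=
  (D x * D' y + D y * D' x) / (x * y)

theorem dlogPair_comm (D D' : Derivation ℤ F F) (x y : F) :
    dlogPair D D' x y = dlogPair D D' y x := by
  simp only [dlogPair, add_comm, mul_comm]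

theorem dlogPair_mul_left (D D' : Derivation ℤ F F) {x x' : F} (hx : x ≠ 0) (hx' : x' ≠ 0)
    (y : F) : dlogPair D D' (x * x') y = dlogPair D D' x y + dlogPair D D' x' y := by
  rcases eq_or_ne y 0 with rfl | hy
  · simp [dlogPair]
  simp only [dlogPair, Derivation.leibniz, smul_eq_mul]
  field_simp
  ring

variable [CharP F 2]

theorem Derivation.map_sq_eq_zero (D : Derivation ℤ F F) (y : F) : D (y ^ 2) = 0 := by
  rw [D.leibniz_pow, CharTwo.two_nsmul]

theorem Derivation.map_pfister (D : Derivation ℤ F F) (a b s t u v : F) :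
    D (s ^ 2 + a * t ^ 2 + b * u ^ 2 + a * b * v ^ 2) =
      t ^ 2 * D a + u ^ 2 * D b + v ^ 2 * (a * D b + b * D a) := by
  simp only [map_add, Derivation.leibniz, smul_eq_mul, D.map_sq_eq_zero]
  ring

theorem dlogPair_eq_zero_of_add_eq_one (D D' : Derivation ℤ F F) {x y : F} (h : x + y = 1) :
    dlogPair D D' x y = 0 := by
  have hD : D y = D x :=
    CharTwo.add_eq_zero.mp (by rw [add_comm, ← map_add, h, D.map_one_eq_zero])
  have hD' : D' y = D' x :=
    CharTwo.add_eq_zero.mp (by rw [add_comm, ← map_add, h, D'.map_one_eq_zero])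
  rw [dlogPair, hD, hD', mul_comm (D x), CharTwo.add_self_eq_zero, zero_div]

theorem dlogPair_eq_of_s2_eq (D D' : Derivation ℤ F F) {a b e f : F} (ha : a ≠ 0) (hb : b ≠ 0)
    (he : e ≠ 0) (hf : f ≠ 0) (h : s2 1 a b = s2 1 e f) :
    dlogPair D D' a b = dlogPair D D' e f := by
  let φ : KMod F 2 1 →+ F := liftMod2 (fun x y => dlogPair D D' x y)
    (fun x x' y => dlogPair_mul_left D D' x.ne_zero x'.ne_zero y)
    (fun x y y' => by
      simp only [Units.val_mul, dlogPair_comm D D' x, dlogPair_mul_left D D' y.ne_zero y'.ne_zero])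
    (fun _ _ hxy => dlogPair_eq_zero_of_add_eq_one D D' hxy) CharTwo.two_nsmul
  simpa [φ, liftMod2_s2, ha, hb, he, hf] using congrArg φ h

theorem exists_derivation_apply_eq₂ {a b : F} (ha : a ∉ squares F) (hb : b ∉ squaresAdjoin a)
    (ca cb : F) : ∃ D : Derivation ℤ F F, D a = ca ∧ D b = cb := by
  obtain ⟨D, hD⟩ := (PartialDerivation.ofPair ha hb ca cb).exists_derivation_extending
  obtain ⟨ha₂, hb₂, hDa, hDb⟩ := PartialDerivation.ofPair_spec ha hb ca cb
  exact ⟨D, (hD a ha₂).trans hDa, (hD b hb₂).trans hDb⟩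

theorem exists_derivation_apply_eq₃ {a b e : F} (ha : a ∉ squares F)
    (hb : b ∉ squaresAdjoin a) (he : e ∉ squaresAdjoin₂ a b) (ca cb ce : F) :
    ∃ D : Derivation ℤ F F, D a = ca ∧ D b = cb ∧ D e = ce := by
  obtain ⟨D, hD, hDe⟩ := (PartialDerivation.ofPair ha hb ca cb).exists_derivation_extend he ce
  obtain ⟨ha₂, hb₂, hDa, hDb⟩ := PartialDerivation.ofPair_spec ha hb ca cb
  exact ⟨D, (hD a ha₂).trans hDa, (hD b hb₂).trans hDb, hDe⟩

theorem mem_squaresAdjoin₂_of_dlogPair_eq {a b e f : F} (ha : a ∉ squares F)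
    (hb : b ∉ squaresAdjoin a) (he : e ≠ 0) (hf : f ≠ 0)
    (H : ∀ D D' : Derivation ℤ F F, dlogPair D D' a b = dlogPair D D' e f) :
    e ∈ squaresAdjoin₂ a b := by
  have ha₀ : a ≠ 0 := (ne_of_mem_of_not_mem (zero_mem _) ha).symm
  have hb₀ : b ≠ 0 := (ne_of_mem_of_not_mem (zero_mem _) hb).symm
  by_contra he'
  obtain ⟨D₁, h₁a, h₁b, h₁e⟩ := exists_derivation_apply_eq₃ ha hb he' 1 0 0
  obtain ⟨D₂, h₂a, h₂b, h₂e⟩ := exists_derivation_apply_eq₃ ha hb he' 0 1 0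
  obtain ⟨D₃, h₃a, h₃b, h₃e⟩ := exists_derivation_apply_eq₃ ha hb he' 0 0 1
  -- `D₃` kills `a` and `b`, so pairing it with `D₁`, `D₂` shows that these kill `f` as well;
  -- but then `D₁, D₂` pair to `0` on `{e, f}` and to `1 / ab` on `{a, b}`.
  have h₁f : D₁ f = 0 := by
    simpa [dlogPair, h₁a, h₁b, h₁e, h₃a, h₃b, h₃e, he, hf] using (H D₃ D₁).symm
  have h₂f : D₂ f = 0 := by
    simpa [dlogPair, h₂a, h₂b, h₂e, h₃a, h₃b, h₃e, he, hf] using (H D₃ D₂).symm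
  simpa [dlogPair, h₁a, h₁b, h₁e, h₂a, h₂b, h₂e, h₁f, h₂f, ha₀, hb₀] using H D₁ D₂

/-- With `α² = a`, `β² = b`, `ε = s + tα + uβ + vαβ` and `φ = s' + t'α + u'β + v'αβ`, this is the
square of `εφ + αβ (∂_α ε ∂_β φ + ∂_α φ ∂_β ε)`. -/
theorem pfister_mul_add_jacobian (a b s t u v s' t' u' v' : F) :
    (s ^ 2 + a * t ^ 2 + b * u ^ 2 + a * b * v ^ 2) *
        (s' ^ 2 + a * t' ^ 2 + b * u' ^ 2 + a * b * v' ^ 2) +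
      a * b * ((t ^ 2 + b * v ^ 2) * (u' ^ 2 + a * v' ^ 2) +
        (t' ^ 2 + b * v' ^ 2) * (u ^ 2 + a * v ^ 2)) =
    (s * s' + a * t * t' + b * u * u' + a * b * v * v') ^ 2 + a * (s * t' + t * s') ^ 2 +
      b * (s * u' + u * s') ^ 2 + a * b * (s * v' + v * s') ^ 2 := by
  linear_combination (a * b * t ^ 2 * u' ^ 2 + a * b * u ^ 2 * t' ^ 2 + a * b ^ 2 * u ^ 2 * v' ^ 2
    + a * b ^ 2 * v ^ 2 * u' ^ 2 + a ^ 2 * b * t ^ 2 * v' ^ 2 + a ^ 2 * b * v ^ 2 * t' ^ 2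
    + a ^ 2 * b ^ 2 * v ^ 2 * v' ^ 2
    - 2 * (a * s * t * s' * t' + a * b * s * v * s' * v' + b * s * u * s' * u')
    - (a * b * t * u * t' * u' + a * b ^ 2 * u * v * u' * v' + a ^ 2 * b * t * v * t' * v')) *
      CharTwo.two_eq_zero (R := F)

theorem exists_eq_pure_of_dlogPair_eq {a b e f : F} (ha : a ∉ squares F)
    (hb : b ∉ squaresAdjoin a) (he : e ≠ 0) (hf : f ≠ 0)
    (H : ∀ D D' : Derivation ℤ F F, dlogPair D D' a b = dlogPair D D' e f) :
    ∃ t u v, e = a * t ^ 2 + b * u ^ 2 + a * b * v ^ 2 := by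
  obtain ⟨s, t, u, v, rfl⟩ :=
    mem_squaresAdjoin₂.mp (mem_squaresAdjoin₂_of_dlogPair_eq ha hb he hf H)
  obtain ⟨s', t', u', v', rfl⟩ := mem_squaresAdjoin₂.mp <|
    mem_squaresAdjoin₂_of_dlogPair_eq ha hb hf he fun D D' =>
      (H D D').trans (dlogPair_comm D D' _ _)
  have ha₀ : a ≠ 0 := (ne_of_mem_of_not_mem (zero_mem _) ha).symm
  have hb₀ : b ≠ 0 := (ne_of_mem_of_not_mem (zero_mem _) hb).symm
  obtain ⟨D₁, h₁a, h₁b⟩ := exists_derivation_apply_eq₂ ha hb 1 0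
  obtain ⟨D₂, h₂a, h₂b⟩ := exists_derivation_apply_eq₂ ha hb 0 1
  have hJ := H D₁ D₂
  simp only [dlogPair, Derivation.map_pfister, h₁a, h₁b, h₂a, h₂b] at hJ
  rw [div_eq_div_iff (mul_ne_zero ha₀ hb₀) (mul_ne_zero he hf)] at hJ
  have hN : (s * s' + a * t * t' + b * u * u' + a * b * v * v') ^ 2 + a * (s * t' + t * s') ^ 2 +
      b * (s * u' + u * s') ^ 2 + a * b * (s * v' + v * s') ^ 2 = 0 := by
    linear_combination -pfister_mul_add_jacobian a b s t u v s' t' u' v' + hJ + a * b *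
      ((t ^ 2 + b * v ^ 2) * (u' ^ 2 + a * v' ^ 2) + (t' ^ 2 + b * v' ^ 2) * (u ^ 2 + a * v ^ 2)) *
        CharTwo.two_eq_zero (R := F)
  obtain ⟨hS, hT, hU, hV⟩ := eq_zero_of_pfister_eq_zero ha hb hN
  have hs : s * (s' ^ 2 + a * t' ^ 2 + b * u' ^ 2 + a * b * v' ^ 2) = 0 := by
    linear_combination s' * hS + a * t' * hT + b * u' * hU + a * b * v' * hV -
      (a * t * t' * s' + b * u * u' * s' + a * b * v * v' * s') * CharTwo.two_eq_zero (R := F)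
  rw [(mul_eq_zero.mp hs).resolve_right hf]
  exact ⟨t, u, v, by ring⟩

theorem exists_eq_pure_of_s2_eq {a b e f : F} (ha : a ∉ squares F) (hb : b ∉ squaresAdjoin a)
    (he : e ≠ 0) (hf : f ≠ 0) (h : s2 1 a b = s2 1 e f) :
    ∃ t u v, e = a * t ^ 2 + b * u ^ 2 + a * b * v ^ 2 :=
  exists_eq_pure_of_dlogPair_eq ha hb he hf fun D D' =>
    dlogPair_eq_of_s2_eq D D' (ne_of_mem_of_not_mem (zero_mem _) ha).symm
      (ne_of_mem_of_not_mem (zero_mem _) hb).symm he hf h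

end Derivations

theorem stmt15_general (F : Type*) [Field F] [CharP F 2] (a b c d e f g : F)
    (he : e ≠ 0) (hf : f ≠ 0) (hg : g ≠ 0)
    (hab : s2 1 a b = s2 1 e f) (hcd : s2 1 c d = s2 1 e g) :
    ∃ x : Fin 6 → F, x ≠ 0 ∧
      a * x 0 ^ 2 + b * x 1 ^ 2 + a * b * x 2 ^ 2 +
        c * x 3 ^ 2 + d * x 4 ^ 2 + c * d * x 5 ^ 2 = 0 := by
  by_cases hA : a ∈ squares F ∨ b ∈ squaresAdjoin a
  · obtain ⟨x, y, z, hxyz, h⟩ := exists_isotropic_of_mem_squares_or hA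
    refine ⟨![x, y, z, 0, 0, 0], fun h0 => hxyz ⟨congrFun h0 0, congrFun h0 1, congrFun h0 2⟩, ?_⟩
    simpa using h
  by_cases hC : c ∈ squares F ∨ d ∈ squaresAdjoin c
  · obtain ⟨x, y, z, hxyz, h⟩ := exists_isotropic_of_mem_squares_or hC
    refine ⟨![0, 0, 0, x, y, z], fun h0 => hxyz ⟨congrFun h0 3, congrFun h0 4, congrFun h0 5⟩, ?_⟩
    simpa using h
  obtain ⟨ha, hb⟩ := not_or.mp hA
  obtain ⟨hc, hd⟩ := not_or.mp hC
  obtain ⟨t, u, v, h₁⟩ := exists_eq_pure_of_s2_eq ha hb he hf hab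
  obtain ⟨t', u', v', h₂⟩ := exists_eq_pure_of_s2_eq hc hd he hg hcd
  refine ⟨![t, u, v, t', u', v'], fun h0 => he ?_, ?_⟩
  · obtain ⟨rfl, rfl, rfl⟩ : t = 0 ∧ u = 0 ∧ v = 0 := ⟨congrFun h0 0, congrFun h0 1, congrFun h0 2⟩
    simp [h₁]
  · simp only [Matrix.cons_val]
    linear_combination -h₁ - h₂ + e * CharTwo.two_eq_zero (R := F)

/-- if `{a,b}₂` and `{c,d}₂` have a common slot, then the Albert
form `⟨a,b,ab,c,d,cd⟩` is isotropic. -/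
theorem stmt15 (F : Type*) [Field F] [CharP F 2] (a b c d e f g : F)
    (ha : a ≠ 0) (hb : b ≠ 0) (hc : c ≠ 0) (hd : d ≠ 0)
    (he : e ≠ 0) (hf : f ≠ 0) (hg : g ≠ 0)
    (hab : s2 1 a b = s2 1 e f) (hcd : s2 1 c d = s2 1 e g) :
    ∃ x : Fin 6 → F, x ≠ 0 ∧
      a * x 0 ^ 2 + b * x 1 ^ 2 + a * b * x 2 ^ 2 +
        c * x 3 ^ 2 + d * x 4 ^ 2 + c * d * x 5 ^ 2 = 0 :=
  stmt15_general F a b c d e f g he hf hg hab hcd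
end
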